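/- (Harnack-type inequality from gradient estimate) Let u : M × (0,∞) → ℝ be smooth with 1 < u ≤ D on a complete Riemannian manifold M, and suppose that for some constant Λ > 0 the pointwise bound |∇u|/(u·(1 + log(D/u))) ≤ Λ holds. Then for any two points x₁, x₂ ∈ M at Riemannian distance ρ and any time t: u(x₂, t) ≤ u(x₁, t)^β · (e·D)^{1-β}, where β = exp(-Λ·ρ). -/

import Mathlib

/-- Harnack-type inequality from a gradient estimate. If `u` is
smooth with `1 < u ≤ D` and `|∇u| ≤ Λ·u·(1 + log(D/u))` pointwise, then for any
two points at distance `ρ` one has `u(x₂,t) ≤ u(x₁,t)^β (eD)^{1-β}` with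
`β = e^{-Λρ}`. -/
theorem stmt_6 {n : ℕ} (u : EuclideanSpace ℝ (Fin n) → ℝ → ℝ) (D Λ : ℝ)
    (hD : 1 < D) (hΛ : 0 < Λ)
    (hsmooth : ∀ t : ℝ, 0 < t → ContDiff ℝ (⊤ : ℕ∞) (fun x => u x t))
    (hl : ∀ x t, 0 < t → 1 < u x t) (hb : ∀ x t, 0 < t → u x t ≤ D)
    (hgrad : ∀ x t, 0 < t →
      ‖gradient (fun y => u y t) x‖ ≤ Λ * (u x t * (1 + Real.log (D / u x t)))) :
    ∀ (x₁ x₂ : EuclideanSpace ℝ (Fin n)) (t : ℝ), 0 < t →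
      u x₂ t ≤ u x₁ t ^ Real.exp (-Λ * dist x₁ x₂)
        * (Real.exp 1 * D) ^ (1 - Real.exp (-Λ * dist x₁ x₂)) := by
  intro x₁ x₂ t ht
  set g : EuclideanSpace ℝ (Fin n) → ℝ := fun x => u x t with hgdef
  have h1 : ∀ x, 1 < g x := fun x => hl x t ht
  have hbD : ∀ x, g x ≤ D := fun x => hb x t ht
  have hpos : ∀ x, 0 < g x := fun x => lt_trans one_pos (h1 x)
  set c : ℝ := 1 + Real.log D with hcdef
  have hφpos : ∀ x, 0 < c - Real.log (g x) := by
    intro x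
    have : Real.log (g x) ≤ Real.log D := Real.log_le_log (hpos x) (hbD x)
    simp only [hcdef]; linarith
  set F : EuclideanSpace ℝ (Fin n) → ℝ := fun x => Real.log (c - Real.log (g x))
    with hFdef
  have hgd : ∀ x, DifferentiableAt ℝ g x :=
    fun x => ((hsmooth t ht).differentiable (by simp)).differentiableAt
  have hFderiv : ∀ x, HasFDerivAt F
      ((c - Real.log (g x))⁻¹ • ((-(g x)⁻¹) • fderiv ℝ g x)) x := by
    intro x
    have h0 : HasFDerivAt g (fderiv ℝ g x) x := (hgd x).hasFDerivAt
    have h1' : HasFDerivAt (fun y => Real.log (g y)) ((g x)⁻¹ • fderiv ℝ g x) x :=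
      h0.log (ne_of_gt (hpos x))
    have h2 : HasFDerivAt (fun y => c - Real.log (g y))
        ((-(g x)⁻¹) • fderiv ℝ g x) x := by
      have := (hasFDerivAt_const c x).sub h1'
      rw [zero_sub, ← neg_smul] at this
      exact this
    have h3 := h2.log (ne_of_gt (hφpos x))
    simpa using h3
  have hfbound : ∀ x, ‖fderiv ℝ F x‖ ≤ Λ := by
    intro x
    rw [(hFderiv x).fderiv]
    have hg' : ‖fderiv ℝ g x‖ ≤ Λ * (g x * (c - Real.log (g x))) := by
      have h := hgrad x t ht
      have hlogdiv : Real.log (D / g x) = Real.log D - Real.log (g x) :=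
        Real.log_div (by positivity) (ne_of_gt (hpos x))
      have hnorm : ‖gradient g x‖ = ‖fderiv ℝ g x‖ := by
        rw [gradient]
        exact LinearIsometryEquiv.norm_map _ _
      rw [hnorm] at h
      calc ‖fderiv ℝ g x‖ ≤ Λ * (g x * (1 + Real.log (D / g x))) := h
        _ = Λ * (g x * (c - Real.log (g x))) := by rw [hlogdiv, hcdef]; ring_nf
    rw [norm_smul, norm_smul]
    have hφ := hφpos x
    have hgx := hpos x
    rw [Real.norm_eq_abs, Real.norm_eq_abs, abs_of_pos (inv_pos.mpr hφ),
      abs_neg, abs_of_pos (inv_pos.mpr hgx)]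
    calc (c - Real.log (g x))⁻¹ * ((g x)⁻¹ * ‖fderiv ℝ g x‖)
        ≤ (c - Real.log (g x))⁻¹ * ((g x)⁻¹ * (Λ * (g x * (c - Real.log (g x))))) := by
          apply mul_le_mul_of_nonneg_left _ (le_of_lt (inv_pos.mpr hφ))
          exact mul_le_mul_of_nonneg_left hg' (le_of_lt (inv_pos.mpr hgx))
      _ = Λ := by field_simp
  have hlip : ‖F x₁ - F x₂‖ ≤ Λ * ‖x₁ - x₂‖ := by
    apply Convex.norm_image_sub_le_of_norm_fderiv_le
      (fun x _ => (hFderiv x).differentiableAt) (fun x _ => hfbound x)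
      convex_univ (Set.mem_univ x₂) (Set.mem_univ x₁)
  set ρ : ℝ := dist x₁ x₂ with hρdef
  set β : ℝ := Real.exp (-Λ * ρ) with hβdef
  have hab : F x₁ - F x₂ ≤ Λ * ρ := by
    have := le_trans (le_abs_self _) hlip
    rwa [hρdef, dist_eq_norm]
  set a : ℝ := c - Real.log (g x₁) with hadef
  set b : ℝ := c - Real.log (g x₂) with hbdef
  have hba : β * a ≤ b := by
    have ha : 0 < a := hφpos x₁
    have hbp : 0 < b := hφpos x₂
    have : Real.log a - Real.log b ≤ Λ * ρ := hab
    have h2 : β * a = Real.exp (-Λ * ρ + Real.log a) := by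
      rw [Real.exp_add, Real.exp_log ha, hβdef]
    rw [h2, ← Real.exp_log hbp]
    apply Real.exp_le_exp.mpr
    linarith
  have hlog : Real.log (g x₂) ≤ β * Real.log (g x₁) + (1 - β) * c := by
    have : Real.log (g x₂) = c - b := by rw [hbdef]; ring
    rw [this]
    have : β * a = β * c - β * Real.log (g x₁) := by rw [hadef]; ring
    nlinarith [hba]
  have hβpos : 0 < β := Real.exp_pos _
  calc g x₂ = Real.exp (Real.log (g x₂)) := (Real.exp_log (hpos x₂)).symm
    _ ≤ Real.exp (β * Real.log (g x₁) + (1 - β) * c) := Real.exp_le_exp.mpr hlog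
    _ = g x₁ ^ β * (Real.exp 1 * D) ^ (1 - β) := by
        rw [Real.exp_add, Real.rpow_def_of_pos (hpos x₁),
          Real.rpow_def_of_pos (by positivity)]
        congr 2
        · ring
        · rw [Real.log_mul (by positivity) (by positivity), Real.log_exp, hcdef]
          ring
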